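/- The maximal value of the upper Birkhoff scaling exponent is log(3/2)/log(2): that is, max over x ∈ [0,1] of limsup_{n→∞} ψ_n(x)/(n log 2) equals log(3/2)/log(2), and this maximum is attained at x = 1/3 and x = 2/3. -/

import Mathlib

noncomputable def psi (x : ℝ) : ℝ := Real.log (1 - Real.cos (2 * Real.pi * x))

noncomputable def psiSum (n : ℕ) (x : ℝ) : ℝ :=
  ∑ ℓ ∈ Finset.range n, psi (Int.fract ((2:ℝ) ^ ℓ * x))

/-- The scaling exponent `limsup_n ψ_n(x)/(n log 2)`. -/
noncomputable def scalingExp (x : ℝ) : ℝ :=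
  Filter.limsup (fun n : ℕ => psiSum n x / (n * Real.log 2)) Filter.atTop

/-!
Write `a ℓ = 1 - cos (2π 2^ℓ x) ∈ [0, 2]`, so that `ψ_n(x) = ∑_{ℓ<n} log (a ℓ)` and the doubling
formula for the cosine gives `a (ℓ+1) = 2 a ℓ (2 - a ℓ)`. Maximising `a² · 2a(2 - a)` on `(0, 2)`
(at `a = 3/2`) yields `2 log (a ℓ) + log (a (ℓ+1)) ≤ 3 log (3/2)`, and summing these
inequalities bounds `ψ_n(x) - n log (3/2)` from above uniformly in `n`. The value `a = 3/2` is a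
fixed point of the recursion, attained at `x = 1/3` and `x = 2/3`, where `ψ_n = n log (3/2)`.
At dyadic `x` some `a m` vanishes, and then `ψ_n(x)` is constant for `n ≥ m` (since `log 0 = 0`).
-/

open Filter Real Topology

lemma Real.limsup_le_of_eventually_le_of_tendsto {ι : Type*} {f : Filter ι} [f.NeBot]
    {u v : ι → ℝ} {L : ℝ} (hL : 0 ≤ L) (huv : ∀ᶠ i in f, u i ≤ v i)
    (hv : Tendsto v f (𝓝 L)) : limsup u f ≤ L := by
  -- `0 ≤ L` covers the case where `u` is not bounded below and `limsup u f` is the junk value `0`.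
  by_cases hu : IsCoboundedUnder (· ≤ ·) f u
  · exact (limsup_le_limsup huv hu hv.isBoundedUnder_le).trans_eq hv.limsup_eq
  · rw [Real.limsup_of_not_isCoboundedUnder hu]
    exact hL

lemma sum_range_le_of_two_mul_add_succ_nonpos {c : ℕ → ℝ} {M : ℝ} (hM : 0 ≤ M)
    (hc : ∀ ℓ, c ℓ ≤ M) (hstep : ∀ ℓ, 2 * c ℓ + c (ℓ + 1) ≤ 0) (n : ℕ) :
    ∑ ℓ ∈ Finset.range n, c ℓ ≤ M := by
  have telescope : ∀ m, 3 * ∑ ℓ ∈ Finset.range m, c ℓ + c m ≤ c 0 := by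
    intro m
    induction m with
    | zero => simp
    | succ m ih =>
      rw [Finset.sum_range_succ]
      linarith [hstep m]
  cases n with
  | zero => simpa using hM
  | succ n =>
    rw [Finset.sum_range_succ]
    linarith [telescope n, hc 0, hc n]

lemma two_mul_log_add_log_le {a : ℝ} (ha₀ : 0 < a) (ha₂ : a < 2) :
    2 * log a + log (2 * a * (2 - a)) ≤ 3 * log (3 / 2) := by
  have hcube : a ^ 2 * (2 * a * (2 - a)) ≤ (3 / 2) ^ 3 := by
    nlinarith [sq_nonneg (2 * a - 3), mul_nonneg ha₀.le (sq_nonneg (2 * a - 3))]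
  have hlog := log_le_log (by positivity) hcube
  rwa [log_mul (by positivity) (by nlinarith), log_pow, log_pow] at hlog

noncomputable def oneSubCosDoubling (x : ℝ) (ℓ : ℕ) : ℝ := 1 - cos (2 * π * (2 ^ ℓ * x))

section oneSubCosDoubling

variable {x : ℝ}

lemma oneSubCosDoubling_succ (x : ℝ) (ℓ : ℕ) :
    oneSubCosDoubling x (ℓ + 1) =
      2 * oneSubCosDoubling x ℓ * (2 - oneSubCosDoubling x ℓ) := by
  have hangle : 2 * π * (2 ^ (ℓ + 1) * x) = 2 * (2 * π * (2 ^ ℓ * x)) := by ring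
  rw [oneSubCosDoubling, oneSubCosDoubling, hangle, cos_two_mul]
  ring

lemma oneSubCosDoubling_nonneg (x : ℝ) (ℓ : ℕ) : 0 ≤ oneSubCosDoubling x ℓ :=
  sub_nonneg.2 (cos_le_one _)

lemma oneSubCosDoubling_pos_of_ne_zero {ℓ : ℕ} (h : oneSubCosDoubling x ℓ ≠ 0) :
    0 < oneSubCosDoubling x ℓ :=
  (oneSubCosDoubling_nonneg x ℓ).lt_of_ne' h

lemma oneSubCosDoubling_lt_two_of_succ_ne_zero {ℓ : ℕ} (h : oneSubCosDoubling x (ℓ + 1) ≠ 0) :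
    oneSubCosDoubling x ℓ < 2 := by
  have h₂ : oneSubCosDoubling x ℓ ≤ 2 := by
    rw [oneSubCosDoubling]
    linarith [neg_one_le_cos (2 * π * (2 ^ ℓ * x))]
  refine h₂.lt_of_ne fun h₂ => h ?_
  rw [oneSubCosDoubling_succ, h₂]
  ring

lemma oneSubCosDoubling_eq_zero_of_le {m n : ℕ} (hm : oneSubCosDoubling x m = 0) (hmn : m ≤ n) :
    oneSubCosDoubling x n = 0 := by
  induction n, hmn using Nat.le_induction with
  | base => exact hm
  | succ n _ ih => rw [oneSubCosDoubling_succ, ih]; ring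

lemma oneSubCosDoubling_eq_of_eq_three_halves (h : oneSubCosDoubling x 0 = 3 / 2) (ℓ : ℕ) :
    oneSubCosDoubling x ℓ = 3 / 2 := by
  induction ℓ with
  | zero => exact h
  | succ ℓ ih => rw [oneSubCosDoubling_succ, ih]; norm_num

end oneSubCosDoubling

lemma psiSum_eq_sum_log (n : ℕ) (x : ℝ) :
    psiSum n x = ∑ ℓ ∈ Finset.range n, log (oneSubCosDoubling x ℓ) := by
  refine Finset.sum_congr rfl fun ℓ _ => ?_
  have hangle : 2 * π * Int.fract ((2 : ℝ) ^ ℓ * x) =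
      2 * π * (2 ^ ℓ * x) - ⌊(2 : ℝ) ^ ℓ * x⌋ * (2 * π) := by
    rw [Int.fract]
    ring
  rw [psi, oneSubCosDoubling, hangle, cos_sub_int_mul_two_pi]

lemma psiSum_le_of_forall_ne_zero {x : ℝ} (hx : ∀ ℓ, oneSubCosDoubling x ℓ ≠ 0) (n : ℕ) :
    psiSum n x ≤ n * log (3 / 2) + (log 2 - log (3 / 2)) := by
  have hpos ℓ := oneSubCosDoubling_pos_of_ne_zero (hx ℓ)
  have hlt ℓ := oneSubCosDoubling_lt_two_of_succ_ne_zero (hx (ℓ + 1))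
  have hstep ℓ : 2 * log (oneSubCosDoubling x ℓ) + log (oneSubCosDoubling x (ℓ + 1)) ≤
      3 * log (3 / 2) := by
    rw [oneSubCosDoubling_succ]
    exact two_mul_log_add_log_le (hpos ℓ) (hlt ℓ)
  have hbound := sum_range_le_of_two_mul_add_succ_nonpos
    (c := fun ℓ => log (oneSubCosDoubling x ℓ) - log (3 / 2))
    (sub_nonneg.2 (log_le_log (by norm_num) (by norm_num)))
    (fun ℓ => sub_le_sub_right (log_le_log (hpos ℓ) (hlt ℓ).le) _)
    (fun ℓ => by linarith [hstep ℓ]) n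
  rw [Finset.sum_sub_distrib, Finset.sum_const, Finset.card_range, nsmul_eq_mul] at hbound
  rw [psiSum_eq_sum_log]
  linarith

lemma psiSum_eq_of_le {x : ℝ} {m n : ℕ} (hm : oneSubCosDoubling x m = 0) (hmn : m ≤ n) :
    psiSum n x = psiSum m x := by
  rw [psiSum_eq_sum_log, psiSum_eq_sum_log, ← Finset.sum_range_add_sum_Ico _ hmn, add_eq_left]
  refine Finset.sum_eq_zero fun ℓ hℓ => ?_
  rw [oneSubCosDoubling_eq_zero_of_le hm (Finset.mem_Ico.1 hℓ).1, log_zero]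

lemma exists_psiSum_le (x : ℝ) : ∃ C, ∀ᶠ n : ℕ in atTop, psiSum n x ≤ n * log (3 / 2) + C := by
  by_cases hx : ∀ ℓ, oneSubCosDoubling x ℓ ≠ 0
  · exact ⟨_, Eventually.of_forall (psiSum_le_of_forall_ne_zero hx)⟩
  · obtain ⟨m, hm⟩ := not_forall_not.1 hx
    refine ⟨psiSum m x, eventually_atTop.2 ⟨m, fun n hmn => ?_⟩⟩
    rw [psiSum_eq_of_le hm hmn]
    have : 0 ≤ (n : ℝ) * log (3 / 2) := by positivity
    linarith

lemma scalingExp_le (x : ℝ) : scalingExp x ≤ log (3 / 2) / log 2 := by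
  obtain ⟨C, hC⟩ := exists_psiSum_le x
  have hlog2 : 0 < log 2 := log_pos one_lt_two
  refine Real.limsup_le_of_eventually_le_of_tendsto (by positivity)
    (v := fun n : ℕ => log (3 / 2) / log 2 + C / log 2 / n) ?_ ?_
  · filter_upwards [hC, eventually_gt_atTop 0] with n hn hn₀
    have hn₀ : (0 : ℝ) < n := Nat.cast_pos.2 hn₀
    rw [div_le_iff₀ (by positivity)]
    field_simp
    linarith
  · simpa using tendsto_const_nhds.add (tendsto_const_div_atTop_nhds_zero_nat (C / log 2))

lemma scalingExp_of_cos_eq {x : ℝ} (hx : cos (2 * π * x) = -1 / 2) :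
    scalingExp x = log (3 / 2) / log 2 := by
  have hfix := oneSubCosDoubling_eq_of_eq_three_halves (x := x)
    (by rw [oneSubCosDoubling, pow_zero, one_mul, hx]; norm_num)
  have hsum : ∀ n, psiSum n x = n * log (3 / 2) := fun n => by
    simp [psiSum_eq_sum_log, hfix]
  refine (tendsto_const_nhds.congr' ?_).limsup_eq
  filter_upwards [eventually_gt_atTop 0] with n hn
  have : (n : ℝ) ≠ 0 := Nat.cast_ne_zero.2 hn.ne'
  rw [hsum]
  field_simp

theorem max_scaling_exponent :
    (∀ x ∈ Set.Icc (0:ℝ) 1, scalingExp x ≤ Real.log (3/2) / Real.log 2) ∧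
    scalingExp (1/3) = Real.log (3/2) / Real.log 2 ∧
    scalingExp (2/3) = Real.log (3/2) / Real.log 2 := by
  refine ⟨fun x _ => scalingExp_le x, scalingExp_of_cos_eq ?_, scalingExp_of_cos_eq ?_⟩
  · rw [show 2 * π * (1 / 3) = π - π / 3 by ring, cos_pi_sub, cos_pi_div_three]
    norm_num
  · rw [show 2 * π * (2 / 3) = π / 3 + π by ring, cos_add_pi, cos_pi_div_three]
    norm_num
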